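/- arXiv:2110.13645 — 2 statements merged into one kernel-verified Lean document; each statement's English description precedes it below -/
import Mathlib

section
/- For every n ≡ 2 (mod 4) with n > 2, the shuffle-cube SQ_n is not vertex-transitive, i.e., there exist vertices u and v of SQ_n such that no graph automorphism of SQ_n maps u to v. -/
/-- The `i`-th bit of a binary string of length `n` (junk value `false` out of range). -/
def bitOf {n : ℕ} (u : Fin n → Bool) (i : ℕ) : Bool :=
  if h : i < n then u ⟨i, h⟩ else false

/-- Membership of the 4-tuple `x3x2x1x0` in the set `V_{ab}`, where
`V_{00} = {1111,0001,0010,0011}`, `V_{01} = {0100,0101,0110,0111}`,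
`V_{10} = {1000,1001,1010,1011}`, `V_{11} = {1100,1101,1110,1111}`. -/
def inV (a b x3 x2 x1 x0 : Bool) : Prop :=
  (x3, x2, x1, x0) ∈ (match a, b with
    | false, false => [(true,true,true,true),(false,false,false,true),
        (false,false,true,false),(false,false,true,true)]
    | false, true  => [(false,true,false,false),(false,true,false,true),
        (false,true,true,false),(false,true,true,true)]
    | true, false  => [(true,false,false,false),(true,false,false,true),
        (true,false,true,false),(true,false,true,true)]
    | true, true   => [(true,true,false,false),(true,true,false,true),
        (true,true,true,false),(true,true,true,true)])

/-- `u` and `v` agree in all bits except in exactly one of the two bits `u_1, u_0`. -/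
def lowRel {n : ℕ} (u v : Fin n → Bool) : Prop :=
  ∃ i < 2, bitOf u i ≠ bitOf v i ∧ ∀ k, k ≠ i → bitOf u k = bitOf v k

/-- `u` and `v` agree in all bits outside the `j`-th 4-bit block
`u_{4j+1} u_{4j} u_{4j-1} u_{4j-2}`. -/
def blockAgree {n : ℕ} (u v : Fin n → Bool) (j : ℕ) : Prop :=
  ∀ k, (k < 4*j - 2 ∨ 4*j + 1 < k) → bitOf u k = bitOf v k

/-- The shuffle-cube relation: condition (i) or condition (ii). -/
def sqRel {n : ℕ} (u v : Fin n → Bool) : Prop :=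
  lowRel u v ∨ ∃ j, 1 ≤ j ∧ j ≤ (n-2)/4 ∧ blockAgree u v j ∧
    inV (bitOf u 1) (bitOf u 0)
      (xor (bitOf u (4*j+1)) (bitOf v (4*j+1)))
      (xor (bitOf u (4*j))   (bitOf v (4*j)))
      (xor (bitOf u (4*j-1)) (bitOf v (4*j-1)))
      (xor (bitOf u (4*j-2)) (bitOf v (4*j-2)))

/-- The `n`-dimensional shuffle-cube `SQ_n`. -/
def SQ (n : ℕ) : SimpleGraph (Fin n → Bool) := SimpleGraph.fromRel sqRel

lemma ext_of_bitOf {n : ℕ} {u v : Fin n → Bool} (h : ∀ k, bitOf u k = bitOf v k) : u = v := by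
  funext i
  have := h i.1
  simpa [bitOf, i.2] using this

lemma lowRel_symm {n : ℕ} {u v : Fin n → Bool} (h : lowRel u v) : lowRel v u := by
  obtain ⟨i, hi, hne, hall⟩ := h
  exact ⟨i, hi, hne.symm, fun k hk => (hall k hk).symm⟩

lemma sqRel_symm {n : ℕ} {u v : Fin n → Bool} (h : sqRel u v) : sqRel v u := by
  rcases h with h | ⟨j, hj1, hj2, hag, hV⟩
  · exact Or.inl (lowRel_symm h)
  · refine Or.inr ⟨j, hj1, hj2, fun k hk => (hag k hk).symm, ?_⟩
    have h1 : bitOf v 1 = bitOf u 1 := (hag 1 (Or.inl (by omega))).symm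
    have h0 : bitOf v 0 = bitOf u 0 := (hag 0 (Or.inl (by omega))).symm
    rw [h1, h0]
    simpa [Bool.xor_comm] using hV

lemma inV_ft : ∀ x3 x2 x1 x0 : Bool, inV false true x3 x2 x1 x0 → x2 = true := by
  simp only [inV]; decide

lemma not_sqRel_lowhigh {n : ℕ} {a b : Fin n → Bool} {p q : ℕ} (hp : p < 2) (hq : 2 ≤ q)
    (h1 : bitOf a p ≠ bitOf b p) (h2 : bitOf a q ≠ bitOf b q) : ¬ sqRel a b := by
  rintro (⟨i, hi, _, hall⟩ | ⟨j, hj1, _, hag, _⟩)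
  · exact h2 (hall q (by omega))
  · exact h1 (hag p (Or.inl (by omega)))

lemma not_sqRel_lowlow {n : ℕ} {a b : Fin n → Bool} {p p' : ℕ} (hp : p < 2) (hp' : p' < 2)
    (hne : p ≠ p') (h1 : bitOf a p ≠ bitOf b p) (h2 : bitOf a p' ≠ bitOf b p') :
    ¬ sqRel a b := by
  rintro (⟨i, hi, _, hall⟩ | ⟨j, hj1, _, hag, _⟩)
  · rcases eq_or_ne p i with rfl | hpi
    · exact h2 (hall p' (by omega))
    · exact h1 (hall p hpi)
  · exact h1 (hag p (Or.inl (by omega)))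

/-- For every `n ≡ 2 (mod 4)` with `n > 2`, the shuffle-cube `SQ_n` is not
vertex-transitive: there exist vertices `u, v` such that no automorphism maps `u` to `v`. -/
theorem SQ_not_vertexTransitive (n : ℕ) (hn : n % 4 = 2) (hn2 : 2 < n) :
    ∃ u v : Fin n → Bool, ∀ φ : SQ n ≃g SQ n, φ u ≠ v := by
  have hn6 : 6 ≤ n := by omega
  -- the three special vertices
  set u0 : Fin n → Bool := fun _ => false with hu0def
  set a0 : Fin n → Bool := fun i => decide (i.1 = 2) with ha0def
  set b0 : Fin n → Bool := fun i => decide (i.1 = 3) with hb0def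
  set v0 : Fin n → Bool := fun i => decide (i.1 = 0) with hv0def
  have hu0 : ∀ k, bitOf u0 k = false := by
    intro k; by_cases h : k < n <;> simp [bitOf, h, hu0def]
  have ha0 : ∀ k, bitOf a0 k = decide (k = 2) := by
    intro k; by_cases h : k < n
    · simp [bitOf, h, ha0def]
    · have : k ≠ 2 := by omega
      simp [bitOf, h, this]
  have hb0 : ∀ k, bitOf b0 k = decide (k = 3) := by
    intro k; by_cases h : k < n
    · simp [bitOf, h, hb0def]
    · have : k ≠ 3 := by omega
      simp [bitOf, h, this]
  have hv0 : ∀ k, bitOf v0 k = decide (k = 0) := by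
    intro k; by_cases h : k < n
    · simp [bitOf, h, hv0def]
    · have : k ≠ 0 := by omega
      simp [bitOf, h, this]
  have h14 : 1 ≤ (n-2)/4 := by omega
  -- the triangle u0 a0 b0
  have hra : sqRel u0 a0 := by
    refine Or.inr ⟨1, le_refl 1, h14, ?_, ?_⟩
    · intro k hk
      have : k ≠ 2 := by omega
      simp [hu0, ha0, this]
    · simp only [hu0, ha0]
      norm_num [inV]
  have hrb : sqRel u0 b0 := by
    refine Or.inr ⟨1, le_refl 1, h14, ?_, ?_⟩
    · intro k hk
      have : k ≠ 3 := by omega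
      simp [hu0, hb0, this]
    · simp only [hu0, hb0]
      norm_num [inV]
  have hrab : sqRel a0 b0 := by
    refine Or.inr ⟨1, le_refl 1, h14, ?_, ?_⟩
    · intro k hk
      have h2 : k ≠ 2 := by omega
      have h3 : k ≠ 3 := by omega
      simp [ha0, hb0, h2, h3]
    · simp only [ha0, hb0]
      norm_num [inV]
  have hne_ua : u0 ≠ a0 := by
    intro h
    have := congrFun h ⟨2, by omega⟩
    simp [hu0def, ha0def] at this
  have hne_ub : u0 ≠ b0 := by
    intro h
    have := congrFun h ⟨3, by omega⟩
    simp [hu0def, hb0def] at this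
  have hne_ab : a0 ≠ b0 := by
    intro h
    have := congrFun h ⟨2, by omega⟩
    simp [ha0def, hb0def] at this
  have hadj : ∀ x y : Fin n → Bool, (SQ n).Adj x y ↔ x ≠ y ∧ (sqRel x y ∨ sqRel y x) :=
    fun x y => SimpleGraph.fromRel_adj _ x y
  -- neighbor characterization for v0
  have nbr : ∀ w : Fin n → Bool, sqRel v0 w →
      (∃ i < 2, (∀ k, k ≠ i → bitOf w k = bitOf v0 k) ∧ bitOf w i ≠ bitOf v0 i) ∨
      (∃ j, 1 ≤ j ∧ (∀ k, (k < 4*j - 2 ∨ 4*j + 1 < k) → bitOf w k = bitOf v0 k) ∧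
        bitOf w (4*j) = true) := by
    rintro w (⟨i, hi, hne, hall⟩ | ⟨j, hj1, _, hag, hV⟩)
    · exact Or.inl ⟨i, hi, fun k hk => (hall k hk).symm, hne.symm⟩
    · refine Or.inr ⟨j, hj1, fun k hk => (hag k hk).symm, ?_⟩
      have e1 : bitOf v0 1 = false := by simp [hv0]
      have e0 : bitOf v0 0 = true := by simp [hv0]
      rw [e1, e0] at hV
      have hx2 := inV_ft _ _ _ _ hV
      have e4 : bitOf v0 (4*j) = false := by
        have : 4*j ≠ 0 := by omega
        simp [hv0, this]
      rw [e4] at hx2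
      simpa using hx2
  -- v0 is in no triangle
  have noTri : ∀ a b : Fin n → Bool, sqRel v0 a → sqRel v0 b → a ≠ b → ¬ sqRel a b := by
    intro a b ha hb hab
    rcases nbr a ha with ⟨i1, hi1, hA, hAi⟩ | ⟨j1, hj1, hA, hA4⟩ <;>
      rcases nbr b hb with ⟨i2, hi2, hB, hBi⟩ | ⟨j2, hj2, hB, hB4⟩
    · -- low / low
      rcases eq_or_ne i1 i2 with rfl | hne
      · exfalso
        apply hab
        apply ext_of_bitOf
        intro k
        rcases eq_or_ne k i1 with rfl | hk
        · revert hAi hBi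
          cases bitOf a k <;> cases bitOf b k <;> cases bitOf v0 k <;> simp
        · rw [hA k hk, hB k hk]
      · apply not_sqRel_lowlow hi1 hi2 hne
        · rw [hB i1 hne]; exact hAi
        · rw [hA i2 (Ne.symm hne)]
          exact fun h => hBi h.symm
    · -- low / block
      apply not_sqRel_lowhigh hi1 (q := 4*j2) (by omega)
      · rw [hB i1 (Or.inl (by omega))]; exact hAi
      · rw [hA (4*j2) (by omega), hB4]
        have : bitOf v0 (4*j2) = false := by
          have : 4*j2 ≠ 0 := by omega
          simp [hv0, this]
        simp [this]
    · -- block / low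
      apply not_sqRel_lowhigh hi2 (q := 4*j1) (by omega)
      · rw [hA i2 (Or.inl (by omega))]
        exact fun h => hBi h.symm
      · rw [hB (4*j1) (by omega), hA4]
        have : bitOf v0 (4*j1) = false := by
          have : 4*j1 ≠ 0 := by omega
          simp [hv0, this]
        simp [this]
    · -- block / block
      rcases eq_or_ne j1 j2 with rfl | hne
      · rintro (⟨i, hi, hd, _⟩ | ⟨j', hj'1, _, hag, hV⟩)
        · apply hd
          rw [hA i (Or.inl (by omega)), hB i (Or.inl (by omega))]
        · have ea1 : bitOf a 1 = false := by
            rw [hA 1 (Or.inl (by omega))]; simp [hv0]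
          have ea0 : bitOf a 0 = true := by
            rw [hA 0 (Or.inl (by omega))]; simp [hv0]
          rw [ea1, ea0] at hV
          have hx2 := inV_ft _ _ _ _ hV
          have hd : bitOf a (4*j') ≠ bitOf b (4*j') := by
            intro h; rw [h] at hx2; simp at hx2
          rcases eq_or_ne j' j1 with rfl | hj'
          · rw [hA4, hB4] at hd; exact hd rfl
          · apply hd
            rw [hA (4*j') (by omega), hB (4*j') (by omega)]
      · have hd1 : bitOf a (4*j1) ≠ bitOf b (4*j1) := by
          rw [hA4, hB (4*j1) (by omega)]
          have : (4*j1 : ℕ) ≠ 0 := by omega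
          simp [hv0, this]
        have hd2 : bitOf a (4*j2) ≠ bitOf b (4*j2) := by
          rw [hB4, hA (4*j2) (by omega)]
          have : (4*j2 : ℕ) ≠ 0 := by omega
          simp [hv0, this]
        rintro (⟨i, hi, _, hall⟩ | ⟨j', hj'1, _, hag, _⟩)
        · exact hd1 (hall (4*j1) (by omega))
        · rcases eq_or_ne j' j1 with rfl | hj'
          · exact hd2 (hag (4*j2) (by omega))
          · exact hd1 (hag (4*j1) (by omega))
  -- conclude
  refine ⟨u0, v0, ?_⟩
  intro φ hφ
  have adj_ua : (SQ n).Adj u0 a0 := (hadj u0 a0).mpr ⟨hne_ua, Or.inl hra⟩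
  have adj_ub : (SQ n).Adj u0 b0 := (hadj u0 b0).mpr ⟨hne_ub, Or.inl hrb⟩
  have adj_ab : (SQ n).Adj a0 b0 := (hadj a0 b0).mpr ⟨hne_ab, Or.inl hrab⟩
  have m1 : (SQ n).Adj v0 (φ a0) := by
    have := φ.map_adj_iff.mpr adj_ua
    rwa [hφ] at this
  have m2 : (SQ n).Adj v0 (φ b0) := by
    have := φ.map_adj_iff.mpr adj_ub
    rwa [hφ] at this
  have m3 : (SQ n).Adj (φ a0) (φ b0) := φ.map_adj_iff.mpr adj_ab
  obtain ⟨-, h1⟩ := (hadj _ _).mp m1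
  obtain ⟨-, h2⟩ := (hadj _ _).mp m2
  obtain ⟨hne, h3⟩ := (hadj _ _).mp m3
  have s1 : sqRel v0 (φ a0) := by rcases h1 with h | h; exacts [h, sqRel_symm h]
  have s2 : sqRel v0 (φ b0) := by rcases h2 with h | h; exacts [h, sqRel_symm h]
  rcases h3 with h | h
  · exact noTri _ _ s1 s2 hne h
  · exact noTri _ _ s2 s1 (Ne.symm hne) h
end

section
/- For every n ≡ 2 (mod 4) with n ≥ 2, the simplified shuffle-cube SSQ_n is an n-regular graph with exactly 2^{(3n+2)/4} vertices. -/
/-- Membership in `V_{00} = {1111, 0001, 0010, 0011}`. -/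
def inV00 (x3 x2 x1 x0 : Bool) : Prop :=
  (x3, x2, x1, x0) ∈ [(true,true,true,true),(false,false,false,true),
      (false,false,true,false),(false,false,true,true)]

/-- Vertices of the simplified shuffle-cube `SSQ_n`: binary strings of length `n` with
`u_{4j+1} u_{4j} ∈ {00, 11}` for every `1 ≤ j ≤ (n-2)/4`. -/
def SSQVert (n : ℕ) : Type :=
  {u : Fin n → Bool // ∀ j, 1 ≤ j → j ≤ (n-2)/4 → bitOf u (4*j+1) = bitOf u (4*j)}

instance {n : ℕ} : DecidableEq (SSQVert n) :=
  fun a b => decidable_of_iff (a.1 = b.1) Subtype.ext_iff.symm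

def ssqRel {n : ℕ} (u v : SSQVert n) : Prop :=
  lowRel u.1 v.1 ∨ ∃ j, 1 ≤ j ∧ j ≤ (n-2)/4 ∧ blockAgree u.1 v.1 j ∧
    inV00
      (xor (bitOf u.1 (4*j+1)) (bitOf v.1 (4*j+1)))
      (xor (bitOf u.1 (4*j))   (bitOf v.1 (4*j)))
      (xor (bitOf u.1 (4*j-1)) (bitOf v.1 (4*j-1)))
      (xor (bitOf u.1 (4*j-2)) (bitOf v.1 (4*j-2)))

/-- The `n`-dimensional simplified shuffle-cube `SSQ_n`. -/
def SSQ (n : ℕ) : SimpleGraph (SSQVert n) := SimpleGraph.fromRel ssqRel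

-- === aux (assume compiled) ===
lemma bitOf_lt {n : ℕ} (u : Fin n → Bool) {i : ℕ} (h : i < n) : bitOf u i = u ⟨i, h⟩ := dif_pos h
lemma bitOf_apply {n : ℕ} (u : Fin n → Bool) (i : Fin n) : bitOf u i.val = u i := by
  rw [bitOf_lt u i.isLt]
lemma bitOf_ge {n : ℕ} (u : Fin n → Bool) {i : ℕ} (h : ¬ i < n) : bitOf u i = false := dif_neg h

def maskP (d i : ℕ) : Prop :=
  (d < 2 ∧ i = d) ∨
  (2 ≤ d ∧ (((d-2) % 4 = 0 ∧ i = 4*((d-2)/4)+2) ∨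
            ((d-2) % 4 = 1 ∧ i = 4*((d-2)/4)+3) ∨
            ((d-2) % 4 = 2 ∧ (i = 4*((d-2)/4)+2 ∨ i = 4*((d-2)/4)+3)) ∨
            ((d-2) % 4 = 3 ∧ 4*((d-2)/4)+2 ≤ i ∧ i ≤ 4*((d-2)/4)+5)))

instance maskPDec : ∀ d i, Decidable (maskP d i) := fun d i => by unfold maskP; infer_instance

def mask (d i : ℕ) : Bool := decide (maskP d i)

lemma mask_true_iff {d i : ℕ} : mask d i = true ↔ maskP d i := by simp [mask]
lemma mask_false_iff {d i : ℕ} : mask d i = false ↔ ¬ maskP d i := by simp [mask]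

lemma mask_pair {d j : ℕ} (hj : 1 ≤ j) : mask d (4*j+1) = mask d (4*j) := by
  simp only [mask, decide_eq_decide]
  unfold maskP; omega

def nb {n : ℕ} (v : SSQVert n) (d : ℕ) : SSQVert n :=
  ⟨fun i => xor (v.1 i) (mask d i.val), by
    intro j hj1 hj2
    have h1 : 4*j+1 < n := by omega
    have h0 : 4*j < n := by omega
    have hv := v.2 j hj1 hj2
    rw [bitOf_lt _ h1, bitOf_lt _ h0] at hv ⊢
    show xor (v.1 ⟨4*j+1, h1⟩) (mask d (4*j+1)) = xor (v.1 ⟨4*j, h0⟩) (mask d (4*j))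
    rw [hv, mask_pair hj1]⟩

lemma nb_bit_lt {n : ℕ} (v : SSQVert n) (d : ℕ) {k : ℕ} (h : k < n) :
    bitOf (nb v d).1 k = xor (bitOf v.1 k) (mask d k) := by
  rw [bitOf_lt _ h, bitOf_lt _ h]; rfl

-- === new: symmetry ===
lemma ssqRel_symm {n : ℕ} {u v : SSQVert n} (h : ssqRel u v) : ssqRel v u := by
  rcases h with ⟨i, hi, hne, hag⟩ | ⟨j, hj1, hj2, hag, hV⟩
  · exact Or.inl ⟨i, hi, fun e => hne e.symm, fun k hk => (hag k hk).symm⟩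
  · refine Or.inr ⟨j, hj1, hj2, fun k hk => (hag k hk).symm, ?_⟩
    rw [Bool.xor_comm (bitOf v.1 (4*j+1)), Bool.xor_comm (bitOf v.1 (4*j)),
        Bool.xor_comm (bitOf v.1 (4*j-1)), Bool.xor_comm (bitOf v.1 (4*j-2))]
    exact hV

-- === forward adjacency ===
lemma adj_nb {n : ℕ} (hn : n % 4 = 2) (v : SSQVert n) (d : ℕ) (hd : d < n) :
    (SSQ n).Adj v (nb v d) := by
  have hwit : ∃ i, i < n ∧ mask d i = true := by
    by_cases h2 : d < 2
    · exact ⟨d, by omega, mask_true_iff.mpr (Or.inl ⟨h2, rfl⟩)⟩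
    · by_cases hr : (d-2)%4 = 1
      · exact ⟨4*((d-2)/4)+3, by omega, mask_true_iff.mpr (by unfold maskP; omega)⟩
      · exact ⟨4*((d-2)/4)+2, by omega, mask_true_iff.mpr (by unfold maskP; omega)⟩
  obtain ⟨i, hi, hmi⟩ := hwit
  rw [SSQ, SimpleGraph.fromRel_adj]
  constructor
  · intro heq
    have := congrFun (congrArg Subtype.val heq) ⟨i, hi⟩
    simp only [nb, hmi] at this
    revert this
    cases v.1 ⟨i, hi⟩ <;> simp
  · left
    by_cases h2 : d < 2
    · left
      refine ⟨d, h2, ?_, ?_⟩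
      · rw [nb_bit_lt v d (by omega)]
        rw [mask_true_iff.mpr (Or.inl ⟨h2, rfl⟩)]
        cases bitOf v.1 d <;> simp
      · intro k hk
        by_cases hkn : k < n
        · rw [nb_bit_lt v d hkn, mask_false_iff.mpr (by unfold maskP; omega)]
          simp
        · rw [bitOf_ge _ hkn, bitOf_ge _ hkn]
    · right
      refine ⟨(d-2)/4 + 1, by omega, by omega, ?_, ?_⟩
      · intro k hk
        by_cases hkn : k < n
        · rw [nb_bit_lt v d hkn, mask_false_iff.mpr (by unfold maskP; omega)]
          simp
        · rw [bitOf_ge _ hkn, bitOf_ge _ hkn]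
      · have e1 : 4*((d-2)/4+1)+1 = 4*((d-2)/4)+5 := by omega
        have e2 : 4*((d-2)/4+1) = 4*((d-2)/4)+4 := by omega
        have e3 : 4*((d-2)/4+1)-1 = 4*((d-2)/4)+3 := by omega
        have e4 : 4*((d-2)/4+1)-2 = 4*((d-2)/4)+2 := by omega
        rw [e1, e3, e4, e2]
        have hx : ∀ a b : Bool, xor a (xor a b) = b := by decide
        rw [nb_bit_lt v d (by omega : 4*((d-2)/4)+5 < n), hx]
        rw [nb_bit_lt v d (by omega : 4*((d-2)/4)+4 < n), hx]
        rw [nb_bit_lt v d (by omega : 4*((d-2)/4)+3 < n), hx]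
        rw [nb_bit_lt v d (by omega : 4*((d-2)/4)+2 < n), hx]
        have hr : (d-2)%4 = 0 ∨ (d-2)%4 = 1 ∨ (d-2)%4 = 2 ∨ (d-2)%4 = 3 := by omega
        rcases hr with hr | hr | hr | hr
        · rw [mask_false_iff.mpr (show ¬ maskP d (4*((d-2)/4)+5) by unfold maskP; omega),
              mask_false_iff.mpr (show ¬ maskP d (4*((d-2)/4)+4) by unfold maskP; omega),
              mask_false_iff.mpr (show ¬ maskP d (4*((d-2)/4)+3) by unfold maskP; omega),
              mask_true_iff.mpr (show maskP d (4*((d-2)/4)+2) by unfold maskP; omega)]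
          simp [inV00]
        · rw [mask_false_iff.mpr (show ¬ maskP d (4*((d-2)/4)+5) by unfold maskP; omega),
              mask_false_iff.mpr (show ¬ maskP d (4*((d-2)/4)+4) by unfold maskP; omega),
              mask_true_iff.mpr (show maskP d (4*((d-2)/4)+3) by unfold maskP; omega),
              mask_false_iff.mpr (show ¬ maskP d (4*((d-2)/4)+2) by unfold maskP; omega)]
          simp [inV00]
        · rw [mask_false_iff.mpr (show ¬ maskP d (4*((d-2)/4)+5) by unfold maskP; omega),
              mask_false_iff.mpr (show ¬ maskP d (4*((d-2)/4)+4) by unfold maskP; omega),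
              mask_true_iff.mpr (show maskP d (4*((d-2)/4)+3) by unfold maskP; omega),
              mask_true_iff.mpr (show maskP d (4*((d-2)/4)+2) by unfold maskP; omega)]
          simp [inV00]
        · rw [mask_true_iff.mpr (show maskP d (4*((d-2)/4)+5) by unfold maskP; omega),
              mask_true_iff.mpr (show maskP d (4*((d-2)/4)+4) by unfold maskP; omega),
              mask_true_iff.mpr (show maskP d (4*((d-2)/4)+3) by unfold maskP; omega),
              mask_true_iff.mpr (show maskP d (4*((d-2)/4)+2) by unfold maskP; omega)]
          simp [inV00]

lemma eq_nb_of {n : ℕ} (v u : SSQVert n) (d : ℕ)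
    (h : ∀ k, k < n → xor (bitOf v.1 k) (bitOf u.1 k) = mask d k) : u = nb v d := by
  apply Subtype.ext; funext k
  have hk := h k.val k.isLt
  rw [bitOf_apply, bitOf_apply] at hk
  show u.1 k = xor (v.1 k) (mask d k.val)
  rw [← hk]
  cases v.1 k <;> cases u.1 k <;> rfl

lemma nb_complete {n : ℕ} (hn : n % 4 = 2) (v u : SSQVert n) (h : ssqRel v u) :
    ∃ d, d < n ∧ u = nb v d := by
  rcases h with ⟨i, hi2, hne, hag⟩ | ⟨j, hj1, hj2, hag, hV⟩
  · refine ⟨i, by omega, eq_nb_of v u i ?_⟩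
    intro k hk
    by_cases hki : k = i
    · subst hki
      rw [mask_true_iff.mpr (Or.inl ⟨hi2, rfl⟩)]
      revert hne; cases bitOf v.1 k <;> cases bitOf u.1 k <;> simp
    · rw [hag k hki, Bool.xor_self]
      exact (mask_false_iff.mpr (by unfold maskP; omega)).symm
  · have p1 : 4*j+1 = 4*(j-1)+5 := by omega
    have p3 : 4*j-1 = 4*(j-1)+3 := by omega
    have p4 : 4*j-2 = 4*(j-1)+2 := by omega
    have p2 : 4*j = 4*(j-1)+4 := by omega
    rw [p1, p3, p4, p2] at hV
    simp only [inV00, List.mem_cons, Prod.mk.injEq, List.not_mem_nil, or_false] at hV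
    rcases hV with ⟨h3,h2,h1,h0⟩ | ⟨h3,h2,h1,h0⟩ | ⟨h3,h2,h1,h0⟩ | ⟨h3,h2,h1,h0⟩
    · refine ⟨4*(j-1)+5, by omega, eq_nb_of v u _ ?_⟩
      intro k hk
      have hcase : k < 4*(j-1)+2 ∨ k = 4*(j-1)+2 ∨ k = 4*(j-1)+3 ∨ k = 4*(j-1)+4 ∨
          k = 4*(j-1)+5 ∨ 4*(j-1)+5 < k := by omega
      rcases hcase with hc | hc | hc | hc | hc | hc
      · rw [hag k (by omega), Bool.xor_self]
        exact (mask_false_iff.mpr (by unfold maskP; omega)).symm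
      · subst hc; rw [h0]; exact (mask_true_iff.mpr (by unfold maskP; omega)).symm
      · subst hc; rw [h1]; exact (mask_true_iff.mpr (by unfold maskP; omega)).symm
      · subst hc; rw [h2]; exact (mask_true_iff.mpr (by unfold maskP; omega)).symm
      · subst hc; rw [h3]; exact (mask_true_iff.mpr (by unfold maskP; omega)).symm
      · rw [hag k (by omega), Bool.xor_self]
        exact (mask_false_iff.mpr (by unfold maskP; omega)).symm
    · refine ⟨4*(j-1)+2, by omega, eq_nb_of v u _ ?_⟩
      intro k hk
      have hcase : k < 4*(j-1)+2 ∨ k = 4*(j-1)+2 ∨ k = 4*(j-1)+3 ∨ k = 4*(j-1)+4 ∨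
          k = 4*(j-1)+5 ∨ 4*(j-1)+5 < k := by omega
      rcases hcase with hc | hc | hc | hc | hc | hc
      · rw [hag k (by omega), Bool.xor_self]
        exact (mask_false_iff.mpr (by unfold maskP; omega)).symm
      · subst hc; rw [h0]; exact (mask_true_iff.mpr (by unfold maskP; omega)).symm
      · subst hc; rw [h1]; exact (mask_false_iff.mpr (by unfold maskP; omega)).symm
      · subst hc; rw [h2]; exact (mask_false_iff.mpr (by unfold maskP; omega)).symm
      · subst hc; rw [h3]; exact (mask_false_iff.mpr (by unfold maskP; omega)).symm
      · rw [hag k (by omega), Bool.xor_self]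
        exact (mask_false_iff.mpr (by unfold maskP; omega)).symm
    · refine ⟨4*(j-1)+3, by omega, eq_nb_of v u _ ?_⟩
      intro k hk
      have hcase : k < 4*(j-1)+2 ∨ k = 4*(j-1)+2 ∨ k = 4*(j-1)+3 ∨ k = 4*(j-1)+4 ∨
          k = 4*(j-1)+5 ∨ 4*(j-1)+5 < k := by omega
      rcases hcase with hc | hc | hc | hc | hc | hc
      · rw [hag k (by omega), Bool.xor_self]
        exact (mask_false_iff.mpr (by unfold maskP; omega)).symm
      · subst hc; rw [h0]; exact (mask_false_iff.mpr (by unfold maskP; omega)).symm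
      · subst hc; rw [h1]; exact (mask_true_iff.mpr (by unfold maskP; omega)).symm
      · subst hc; rw [h2]; exact (mask_false_iff.mpr (by unfold maskP; omega)).symm
      · subst hc; rw [h3]; exact (mask_false_iff.mpr (by unfold maskP; omega)).symm
      · rw [hag k (by omega), Bool.xor_self]
        exact (mask_false_iff.mpr (by unfold maskP; omega)).symm
    · refine ⟨4*(j-1)+4, by omega, eq_nb_of v u _ ?_⟩
      intro k hk
      have hcase : k < 4*(j-1)+2 ∨ k = 4*(j-1)+2 ∨ k = 4*(j-1)+3 ∨ k = 4*(j-1)+4 ∨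
          k = 4*(j-1)+5 ∨ 4*(j-1)+5 < k := by omega
      rcases hcase with hc | hc | hc | hc | hc | hc
      · rw [hag k (by omega), Bool.xor_self]
        exact (mask_false_iff.mpr (by unfold maskP; omega)).symm
      · subst hc; rw [h0]; exact (mask_true_iff.mpr (by unfold maskP; omega)).symm
      · subst hc; rw [h1]; exact (mask_true_iff.mpr (by unfold maskP; omega)).symm
      · subst hc; rw [h2]; exact (mask_false_iff.mpr (by unfold maskP; omega)).symm
      · subst hc; rw [h3]; exact (mask_false_iff.mpr (by unfold maskP; omega)).symm
      · rw [hag k (by omega), Bool.xor_self]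
        exact (mask_false_iff.mpr (by unfold maskP; omega)).symm

lemma maskP_mem {d i : ℕ} (h : maskP d i) (hd : 2 ≤ d) :
    4*((d-2)/4)+2 ≤ i ∧ i ≤ 4*((d-2)/4)+5 := by unfold maskP at h; omega

lemma maskP_at2 {d : ℕ} (hd : 2 ≤ d) : maskP d (4*((d-2)/4)+2) ↔ (d-2)%4 ≠ 1 := by
  unfold maskP; omega

lemma maskP_at3 {d : ℕ} (hd : 2 ≤ d) : maskP d (4*((d-2)/4)+3) ↔ (d-2)%4 ≠ 0 := by
  unfold maskP; omega

lemma maskP_at4 {d : ℕ} (hd : 2 ≤ d) : maskP d (4*((d-2)/4)+4) ↔ (d-2)%4 = 3 := by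
  unfold maskP; omega

lemma mask_inj {n d1 d2 : ℕ} (hn : n % 4 = 2) (h1 : d1 < n) (h2 : d2 < n)
    (h : ∀ i < n, mask d1 i = mask d2 i) : d1 = d2 := by
  have H : ∀ i < n, (maskP d1 i ↔ maskP d2 i) := fun i hi => by
    have := h i hi; simpa [mask, decide_eq_decide] using this
  by_cases l1 : d1 < 2 <;> by_cases l2 : d2 < 2
  · have A := H d1 (by omega); have B := H d2 (by omega)
    unfold maskP at A B; omega
  · have A := H d1 (by omega)
    unfold maskP at A; omega
  · have A := H d2 (by omega)
    unfold maskP at A; omega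
  · -- both at least 2; first show the blocks agree
    have k1 : ∃ i, maskP d1 i ∧ i < n ∧ 4*((d1-2)/4)+2 ≤ i ∧ i ≤ 4*((d1-2)/4)+3 := by
      by_cases hr : (d1-2)%4 = 1
      · exact ⟨4*((d1-2)/4)+3, by unfold maskP; omega, by omega, by omega, by omega⟩
      · exact ⟨4*((d1-2)/4)+2, by unfold maskP; omega, by omega, by omega, by omega⟩
    have k2 : ∃ i, maskP d2 i ∧ i < n ∧ 4*((d2-2)/4)+2 ≤ i ∧ i ≤ 4*((d2-2)/4)+3 := by
      by_cases hr : (d2-2)%4 = 1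
      · exact ⟨4*((d2-2)/4)+3, by unfold maskP; omega, by omega, by omega, by omega⟩
      · exact ⟨4*((d2-2)/4)+2, by unfold maskP; omega, by omega, by omega, by omega⟩
    obtain ⟨i1, hi1P, hi1n, hi1l, hi1u⟩ := k1
    obtain ⟨i2, hi2P, hi2n, hi2l, hi2u⟩ := k2
    have hm1 := maskP_mem ((H i1 hi1n).mp hi1P) (by omega)
    have hm2 := maskP_mem ((H i2 hi2n).mpr hi2P) (by omega)
    have hq : (d1-2)/4 = (d2-2)/4 := by omega
    have A : ((d1-2)%4 ≠ 1) ↔ ((d2-2)%4 ≠ 1) := by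
      have t := H (4*((d1-2)/4)+2) (by omega)
      rw [maskP_at2 (by omega)] at t
      rw [hq, maskP_at2 (by omega)] at t
      exact t
    have B : ((d1-2)%4 ≠ 0) ↔ ((d2-2)%4 ≠ 0) := by
      have t := H (4*((d1-2)/4)+3) (by omega)
      rw [maskP_at3 (by omega)] at t
      rw [hq, maskP_at3 (by omega)] at t
      exact t
    have C : ((d1-2)%4 = 3) ↔ ((d2-2)%4 = 3) := by
      have t := H (4*((d1-2)/4)+4) (by omega)
      rw [maskP_at4 (by omega)] at t
      rw [hq, maskP_at4 (by omega)] at t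
      exact t
    omega

lemma degree_eq {n : ℕ} (hn : n % 4 = 2) (v : SSQVert n) :
    ((SSQ n).neighborSet v).ncard = n := by
  have hcancel : ∀ a b c : Bool, xor a b = xor a c → b = c := by decide
  have hinj : Function.Injective (fun d : Fin n => nb v d.val) := by
    intro d1 d2 h
    apply Fin.ext
    refine mask_inj hn d1.isLt d2.isLt ?_
    intro i hi
    have h2 := congrFun (congrArg Subtype.val h) ⟨i, hi⟩
    exact hcancel _ _ _ h2
  have hset : (SSQ n).neighborSet v = Set.range (fun d : Fin n => nb v d.val) := by
    ext u
    simp only [SimpleGraph.mem_neighborSet, Set.mem_range]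
    constructor
    · intro h
      rw [SSQ, SimpleGraph.fromRel_adj] at h
      obtain ⟨hne, hrel⟩ := h
      have hrel' : ssqRel v u := hrel.elim id ssqRel_symm
      obtain ⟨d, hd, hu⟩ := nb_complete hn v u hrel'
      exact ⟨⟨d, hd⟩, hu.symm⟩
    · rintro ⟨d, rfl⟩
      exact adj_nb hn v d.val d.isLt
  rw [hset, ← Set.image_univ, Set.ncard_image_of_injective _ hinj, Set.ncard_univ,
      Nat.card_eq_fintype_card, Fintype.card_fin]

def decodeF (m : ℕ) (p : (Bool × Bool) × (Fin m → Bool × Bool × Bool)) (i : ℕ) : Bool :=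
  if i = 0 then p.1.1 else if i = 1 then p.1.2
  else if h : (i-2)/4 < m then
    (if (i-2)%4 = 0 then (p.2 ⟨(i-2)/4, h⟩).1
     else if (i-2)%4 = 1 then (p.2 ⟨(i-2)/4, h⟩).2.1
     else (p.2 ⟨(i-2)/4, h⟩).2.2)
  else false

lemma decodeF_at2 {m : ℕ} (p : (Bool × Bool) × (Fin m → Bool × Bool × Bool)) {q : ℕ}
    (hq : q < m) : decodeF m p (4*q+2) = (p.2 ⟨q, hq⟩).1 := by
  have e0 : ¬(4*q+2 = 0) := by omega
  have e1 : ¬(4*q+2 = 1) := by omega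
  have ed : (4*q+2-2)/4 = q := by omega
  have em : (4*q+2-2)%4 = 0 := by omega
  simp only [decodeF, if_neg e0, if_neg e1, ed, em, dif_pos hq]
  norm_num

lemma decodeF_at3 {m : ℕ} (p : (Bool × Bool) × (Fin m → Bool × Bool × Bool)) {q : ℕ}
    (hq : q < m) : decodeF m p (4*q+3) = (p.2 ⟨q, hq⟩).2.1 := by
  have e0 : ¬(4*q+3 = 0) := by omega
  have e1 : ¬(4*q+3 = 1) := by omega
  have ed : (4*q+3-2)/4 = q := by omega
  have em : (4*q+3-2)%4 = 1 := by omega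
  simp only [decodeF, if_neg e0, if_neg e1, ed, em, dif_pos hq]
  norm_num

lemma decodeF_at4 {m : ℕ} (p : (Bool × Bool) × (Fin m → Bool × Bool × Bool)) {q : ℕ}
    (hq : q < m) : decodeF m p (4*q+4) = (p.2 ⟨q, hq⟩).2.2 := by
  have e0 : ¬(4*q+4 = 0) := by omega
  have e1 : ¬(4*q+4 = 1) := by omega
  have ed : (4*q+4-2)/4 = q := by omega
  have em : (4*q+4-2)%4 = 2 := by omega
  simp only [decodeF, if_neg e0, if_neg e1, ed, em, dif_pos hq]
  norm_num

lemma decodeF_at5 {m : ℕ} (p : (Bool × Bool) × (Fin m → Bool × Bool × Bool)) {q : ℕ}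
    (hq : q < m) : decodeF m p (4*q+5) = (p.2 ⟨q, hq⟩).2.2 := by
  have e0 : ¬(4*q+5 = 0) := by omega
  have e1 : ¬(4*q+5 = 1) := by omega
  have ed : (4*q+5-2)/4 = q := by omega
  have em : (4*q+5-2)%4 = 3 := by omega
  simp only [decodeF, if_neg e0, if_neg e1, ed, em, dif_pos hq]
  norm_num

lemma decodeF_at0 {m : ℕ} (p : (Bool × Bool) × (Fin m → Bool × Bool × Bool)) :
    decodeF m p 0 = p.1.1 := by simp [decodeF]

lemma decodeF_at1 {m : ℕ} (p : (Bool × Bool) × (Fin m → Bool × Bool × Bool)) :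
    decodeF m p 1 = p.1.2 := by simp [decodeF]

lemma card_eq {n : ℕ} (hn : n % 4 = 2) :
    Nat.card (SSQVert n) = 2 ^ ((3*n+2)/4) := by
  set m := (n-2)/4 with hm
  have e : SSQVert n ≃ ((Bool × Bool) × (Fin m → Bool × Bool × Bool)) :=
    { toFun := fun u => ((bitOf u.1 0, bitOf u.1 1),
        fun q => (bitOf u.1 (4*q.val+2), bitOf u.1 (4*q.val+3), bitOf u.1 (4*q.val+4)))
      invFun := fun p => ⟨fun i => decodeF m p i.val, by
        intro j hj1 hj2
        have h1 : 4*j+1 < n := by omega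
        have h0 : 4*j < n := by omega
        have hq : j - 1 < m := by omega
        rw [bitOf_lt _ h1, bitOf_lt _ h0]
        show decodeF m p (4*j+1) = decodeF m p (4*j)
        rw [show 4*j+1 = 4*(j-1)+5 by omega, show 4*j = 4*(j-1)+4 by omega,
            decodeF_at5 p hq, decodeF_at4 p hq]⟩
      left_inv := fun u => by
        apply Subtype.ext; funext i
        show decodeF m _ i.val = u.1 i
        rw [← bitOf_apply u.1 i]
        have hi : i.val < n := i.isLt
        rcases (by omega : i.val = 0 ∨ i.val = 1 ∨ 2 ≤ i.val) with h | h | h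
        · rw [h, decodeF_at0]
        · rw [h, decodeF_at1]
        · have hq : (i.val-2)/4 < m := by omega
          rcases (by omega : i.val = 4*((i.val-2)/4)+2 ∨ i.val = 4*((i.val-2)/4)+3 ∨
              i.val = 4*((i.val-2)/4)+4 ∨ i.val = 4*((i.val-2)/4)+5) with hc | hc | hc | hc
          · rw [hc, decodeF_at2 _ hq]
          · rw [hc, decodeF_at3 _ hq]
          · rw [hc, decodeF_at4 _ hq]
          · rw [hc, decodeF_at5 _ hq]
            have hu := u.2 ((i.val-2)/4 + 1) (by omega) (by omega)
            rw [show 4*((i.val-2)/4+1)+1 = 4*((i.val-2)/4)+5 by omega,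
                show 4*((i.val-2)/4+1) = 4*((i.val-2)/4)+4 by omega] at hu
            exact hu.symm
      right_inv := fun p => by
        refine Prod.ext (Prod.ext ?_ ?_) (funext fun q => ?_)
        · show bitOf (fun i : Fin n => decodeF m p i.val) 0 = p.1.1
          rw [bitOf_lt _ (show 0 < n by omega)]
          exact decodeF_at0 p
        · show bitOf (fun i : Fin n => decodeF m p i.val) 1 = p.1.2
          rw [bitOf_lt _ (show 1 < n by omega)]
          exact decodeF_at1 p
        · have hq : q.val < m := q.isLt
          have h2 : 4*q.val+2 < n := by omega
          have h3 : 4*q.val+3 < n := by omega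
          have h4 : 4*q.val+4 < n := by omega
          show (bitOf (fun i : Fin n => decodeF m p i.val) (4*q.val+2),
                bitOf (fun i : Fin n => decodeF m p i.val) (4*q.val+3),
                bitOf (fun i : Fin n => decodeF m p i.val) (4*q.val+4)) = p.2 q
          rw [bitOf_lt _ h2, bitOf_lt _ h3, bitOf_lt _ h4]
          show (decodeF m p (4*q.val+2), decodeF m p (4*q.val+3), decodeF m p (4*q.val+4)) = p.2 q
          rw [decodeF_at2 p hq, decodeF_at3 p hq, decodeF_at4 p hq] }
  rw [Nat.card_congr e]
  have hcard : Nat.card ((Bool × Bool) × (Fin m → Bool × Bool × Bool)) = 2^(3*m+2) := by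
    rw [Nat.card_eq_fintype_card]
    simp [Fintype.card_prod, Fintype.card_fun]
    ring_nf
    rw [show (8:ℕ) = 2^3 from rfl, ← pow_mul]
    ring_nf
  rw [hcard, show (3*n+2)/4 = 3*m+2 by omega]

/-- For every `n ≡ 2 (mod 4)` (so `n ≥ 2`), the simplified shuffle-cube `SSQ_n`
is `n`-regular with exactly `2^{(3n+2)/4}` vertices. -/
theorem SSQ_regular_card (n : ℕ) (hn : n % 4 = 2) :
    (∀ v : SSQVert n, ((SSQ n).neighborSet v).ncard = n) ∧
      Nat.card (SSQVert n) = 2 ^ ((3 * n + 2) / 4) := by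
  exact ⟨fun v => degree_eq hn v, card_eq hn⟩
end
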